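/- arXiv:2507.02435 — 8 statements merged into one kernel-verified Lean document; each statement's English description precedes it below -/
import Mathlib

section
/- For every complex number q with |q| < 1, the following identity holds: ∏_{k=0}^{∞} (1 + q^{2k+1}) / ∏_{k=0}^{∞} (1 - q^{k+1}) = 1 / ( ∏_{k=0}^{∞} (1 - q^{4k+4}) · (∏_{k=0}^{∞} (1 - q^{4k+1}))^2 · (∏_{k=0}^{∞} (1 - q^{4k+3}))^2 ). In q-Pochhammer notation: (-q; q^2)_∞ / (q; q)_∞ = 1 / ( (q^4; q^4)_∞ · (q; q^4)_∞^2 · (q^3; q^4)_∞^2 ). (This expresses that the generating function for cylindric partitions of profile c = (1,1) given by Theorem 5 agrees with Borodin's infinite product.) -/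
/-!
Splitting products into even- and odd-indexed factors gives
`(q;q)_∞ = (q;q²)_∞ (q²;q²)_∞`, `(q;q²)_∞ = (q;q⁴)_∞ (q³;q⁴)_∞` and
`(q²;q²)_∞ = (q²;q⁴)_∞ (q⁴;q⁴)_∞`, while `(-q;q²)_∞ (q;q²)_∞ = (q²;q⁴)_∞` factor by factor.
Substituting these into the left-hand side, `(q²;q⁴)_∞` cancels and what remains is the
right-hand side.
-/

section

variable {q : ℂ}

lemma summable_norm_pow_mul_add (hq : ‖q‖ < 1) {a : ℕ} (ha : 0 < a) (b : ℕ) :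
    Summable fun k : ℕ => ‖q ^ (a * k + b)‖ := by
  have hgeom := summable_geometric_of_lt_one (by positivity)
    (pow_lt_one₀ (norm_nonneg q) hq ha.ne')
  refine (hgeom.mul_left (‖q‖ ^ b)).congr fun k => ?_
  rw [norm_pow, ← pow_mul, ← pow_add, add_comm]

lemma multipliable_one_add_pow_mul_add (hq : ‖q‖ < 1) {a : ℕ} (ha : 0 < a) (b : ℕ) :
    Multipliable fun k : ℕ => 1 + q ^ (a * k + b) :=
  multipliable_one_add_of_summable (summable_norm_pow_mul_add hq ha b)

lemma multipliable_one_sub_pow_mul_add (hq : ‖q‖ < 1) {a : ℕ} (ha : 0 < a) (b : ℕ) :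
    Multipliable fun k : ℕ => 1 - q ^ (a * k + b) := by
  simpa only [sub_eq_add_neg] using
    multipliable_one_add_of_summable (f := fun k : ℕ => -q ^ (a * k + b))
      (by simpa only [norm_neg] using summable_norm_pow_mul_add hq ha b)

lemma tprod_one_sub_pow_mul_add_ne_zero (hq : ‖q‖ < 1) {a b : ℕ} (ha : 0 < a) (hb : 0 < b) :
    ∏' k : ℕ, (1 - q ^ (a * k + b)) ≠ 0 := by
  have hfactor (k : ℕ) : 1 + -q ^ (a * k + b) ≠ 0 := by
    rw [← sub_eq_add_neg, sub_ne_zero]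
    refine fun h => (pow_lt_one₀ (norm_nonneg q) hq (by omega : a * k + b ≠ 0)).ne ?_
    rw [← norm_pow, ← h, norm_one]
  simpa only [sub_eq_add_neg] using
    tprod_one_add_ne_zero_of_summable hfactor
      (by simpa only [norm_neg] using summable_norm_pow_mul_add hq ha b)

lemma tprod_one_sub_pow_mul_add_eq_even_mul_odd (hq : ‖q‖ < 1) {a : ℕ} (ha : 0 < a) (b : ℕ) :
    ∏' k : ℕ, (1 - q ^ (a * k + b)) =
      (∏' k : ℕ, (1 - q ^ (2 * a * k + b))) * ∏' k : ℕ, (1 - q ^ (2 * a * k + (a + b))) := by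
  have heven (k : ℕ) : a * (2 * k) + b = 2 * a * k + b := by ring
  have hodd (k : ℕ) : a * (2 * k + 1) + b = 2 * a * k + (a + b) := by ring
  have h2a : 0 < 2 * a := by omega
  have h := tprod_even_mul_odd (f := fun k : ℕ => 1 - q ^ (a * k + b))
    (by simpa only [heven] using multipliable_one_sub_pow_mul_add hq h2a b)
    (by simpa only [hodd] using multipliable_one_sub_pow_mul_add hq h2a (a + b))
  simpa only [heven, hodd] using h.symm

lemma tprod_one_add_pow_mul_tprod_one_sub_pow (hq : ‖q‖ < 1) {a : ℕ} (ha : 0 < a) (b : ℕ) :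
    (∏' k : ℕ, (1 + q ^ (a * k + b))) * ∏' k : ℕ, (1 - q ^ (a * k + b)) =
      ∏' k : ℕ, (1 - q ^ (2 * a * k + 2 * b)) := by
  rw [← (multipliable_one_add_pow_mul_add hq ha b).tprod_mul
    (multipliable_one_sub_pow_mul_add hq ha b)]
  exact tprod_congr fun k => by ring

end

/-- The generating function for cylindric partitions of profile `c = (1,1)`,
`(-q; q^2)_∞ / (q; q)_∞`, equals Borodin's infinite product
`1 / ((q^4; q^4)_∞ (q; q^4)_∞^2 (q^3; q^4)_∞^2)`. -/
theorem profile_one_one (q : ℂ) (hq : ‖q‖ < 1) :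
    (∏' k : ℕ, (1 + q ^ (2 * k + 1))) / (∏' k : ℕ, (1 - q ^ (k + 1))) =
      1 / ((∏' k : ℕ, (1 - q ^ (4 * k + 4))) *
        (∏' k : ℕ, (1 - q ^ (4 * k + 1))) ^ 2 *
        (∏' k : ℕ, (1 - q ^ (4 * k + 3))) ^ 2) := by
  have hsplit₁ := tprod_one_sub_pow_mul_add_eq_even_mul_odd hq one_pos 1
  have hsplit₂₁ := tprod_one_sub_pow_mul_add_eq_even_mul_odd hq two_pos 1
  have hsplit₂₂ := tprod_one_sub_pow_mul_add_eq_even_mul_odd hq two_pos 2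
  have hodd := tprod_one_add_pow_mul_tprod_one_sub_pow hq two_pos 1
  have hne₁ := tprod_one_sub_pow_mul_add_ne_zero hq one_pos one_pos
  have hne₄₁ := tprod_one_sub_pow_mul_add_ne_zero hq four_pos one_pos
  have hne₄₃ := tprod_one_sub_pow_mul_add_ne_zero hq four_pos three_pos
  have hne₄₄ := tprod_one_sub_pow_mul_add_ne_zero hq four_pos four_pos
  simp only [one_mul, mul_one, Nat.reduceMul, Nat.reduceAdd] at hsplit₁ hsplit₂₁ hsplit₂₂ hodd hne₁
  rw [div_eq_div_iff hne₁ (by simp [hne₄₁, hne₄₃, hne₄₄]), hsplit₁, hsplit₂₂, ← hodd, hsplit₂₁]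
  ring
end

section
/- For every complex number q with |q| < 1, the following identity holds: ( ∑_{n=0}^{∞} q^{n^2} / (q^2; q^2)_n ) · (-q^2; q^2)_∞ / (q; q)_∞ = 1 / ( (q; q)_∞ · (q; q^6)_∞ · (q^3; q^6)_∞ · (q^5; q^6)_∞ ), where (q^2; q^2)_n = ∏_{j=0}^{n-1} (1 - q^{2j+2}), (-q^2; q^2)_∞ = ∏_{k=0}^{∞} (1 + q^{2k+2}), (q; q)_∞ = ∏_{k=0}^{∞} (1 - q^{k+1}), and (q^m; q^6)_∞ = ∏_{k=0}^{∞} (1 - q^{6k+m}). (This expresses that the generating function for cylindric partitions of profile c = (3,1) given by Theorem 9 agrees with Borodin's infinite product.) -/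
/-!
Write `S(z) = ∑ q^{n²} zⁿ / (q²; q²)_n`. Comparing coefficients gives the functional equation
`S(z) = (1 + zq) S(zq²)`, and iterating it while `S(q^{2N}) → S(0) = 1` (dominated convergence)
yields Euler's identity `S(1) = (-q; q²)_∞`. Splitting `(-q; q)_∞` into odd and even exponents, the
left-hand side becomes `(-q; q)_∞ / (q; q)_∞`. On the right, `(q; q⁶)(q³; q⁶)(q⁵; q⁶) = (q; q²)_∞`
by residue classes mod 3, and `(-q; q)_∞ (q; q²)_∞ = 1` because
`(-q; q)_∞ (q; q)_∞ = (q²; q²)_∞ = (q; q)_∞ / (q; q²)_∞`.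
-/

open Filter Finset Topology

theorem tprod_eq_prod_range_tprod_mul_add {M : Type*} [CommMonoid M] [TopologicalSpace M]
    [ContinuousMul M] [RegularSpace M] [T2Space M] {f : ℕ → M} (m : ℕ) [NeZero m]
    (hf : Multipliable f) (hres : ∀ i < m, Multipliable fun k ↦ f (m * k + i)) :
    ∏' n, f n = ∏ i ∈ range m, ∏' k, f (m * k + i) := by
  let e : ℕ ≃ Fin m × ℕ := (Nat.divModEquiv m).trans (Equiv.prodComm _ _)
  have he : ∀ p, e.symm p = m * p.2 + p.1 := fun p ↦ by simp [e, Nat.mul_comm]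
  have hprod : HasProd (fun i : Fin m ↦ ∏' k, f (m * k + i)) (∏' n, f n) := by
    refine HasProd.prod_fiberwise (f := f ∘ e.symm) ?_ fun i ↦ ?_
    · exact e.symm.hasProd_iff.mpr hf.hasProd
    · simpa only [Function.comp_apply, he] using (hres i i.is_lt).hasProd
  rw [← hprod.tprod_eq, tprod_fintype,
    Fin.prod_univ_eq_prod_range (fun i ↦ ∏' k, f (m * k + i))]

namespace QSeries

variable {𝕜 : Type*} [NormedField 𝕜] {q : 𝕜}

lemma summable_norm_pow_mul_add (hq : ‖q‖ < 1) {c : ℕ} (hc : c ≠ 0) (d : ℕ) :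
    Summable fun n : ℕ ↦ ‖q ^ (c * n + d)‖ := by
  refine (summable_geometric_of_lt_one (norm_nonneg q) hq).of_nonneg_of_le
    (fun _ ↦ norm_nonneg _) fun n ↦ ?_
  rw [norm_pow]
  exact pow_le_pow_of_le_one (norm_nonneg q) hq.le
    (Nat.le_add_right_of_le (Nat.le_mul_of_pos_left n (Nat.pos_of_ne_zero hc)))

lemma one_sub_pow_ne_zero (hq : ‖q‖ < 1) {m : ℕ} (hm : m ≠ 0) : 1 - q ^ m ≠ 0 := by
  refine sub_ne_zero.mpr fun h ↦ ?_
  have : ‖q ^ m‖ < 1 := by rw [norm_pow]; exact pow_lt_one₀ (norm_nonneg q) hq hm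
  simp [← h] at this

noncomputable def eulerTerm (q z : 𝕜) (n : ℕ) : 𝕜 :=
  q ^ (n ^ 2) * z ^ n / ∏ j ∈ range n, (1 - q ^ (2 * j + 2))

lemma norm_eulerTerm_le (hq : ‖q‖ < 1) {C : ℝ}
    (hC : ∀ n, ‖(∏ j ∈ range n, (1 - q ^ (2 * j + 2)))⁻¹‖ ≤ C) {z : 𝕜} (hz : ‖z‖ ≤ 1)
    (n : ℕ) : ‖eulerTerm q z n‖ ≤ C * ‖q‖ ^ n := by
  have hqn : ‖q‖ ^ n ^ 2 ≤ ‖q‖ ^ n :=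
    pow_le_pow_of_le_one (norm_nonneg q) hq.le (Nat.le_self_pow two_ne_zero n)
  have hzn : ‖z‖ ^ n ≤ 1 := pow_le_one₀ (norm_nonneg z) hz
  calc ‖eulerTerm q z n‖
      = ‖q‖ ^ n ^ 2 * ‖z‖ ^ n * ‖(∏ j ∈ range n, (1 - q ^ (2 * j + 2)))⁻¹‖ := by
        rw [eulerTerm, div_eq_mul_inv, norm_mul, norm_mul, norm_pow, norm_pow]
    _ ≤ ‖q‖ ^ n * 1 * C := by gcongr; exact hC n
    _ = C * ‖q‖ ^ n := by ring

lemma eulerTerm_succ_sub (hq : ‖q‖ < 1) (z : 𝕜) (n : ℕ) :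
    eulerTerm q z (n + 1) - eulerTerm q (z * q ^ 2) (n + 1) =
      z * q * eulerTerm q (z * q ^ 2) n := by
  have hP : ∏ j ∈ range n, (1 - q ^ (2 * j + 2)) ≠ 0 :=
    prod_ne_zero_iff.mpr fun j _ ↦ one_sub_pow_ne_zero hq (by omega)
  have hlast : 1 - q ^ (2 * n + 2) ≠ 0 := one_sub_pow_ne_zero hq (by omega)
  simp only [eulerTerm, prod_range_succ]
  field_simp
  ring

variable [CompleteSpace 𝕜]

lemma multipliable_one_add_pow (hq : ‖q‖ < 1) {c : ℕ} (hc : c ≠ 0) (d : ℕ) :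
    Multipliable fun n : ℕ ↦ 1 + q ^ (c * n + d) :=
  multipliable_one_add_of_summable (summable_norm_pow_mul_add hq hc d)

lemma multipliable_one_sub_pow (hq : ‖q‖ < 1) {c : ℕ} (hc : c ≠ 0) (d : ℕ) :
    Multipliable fun n : ℕ ↦ 1 - q ^ (c * n + d) := by
  simpa only [sub_eq_add_neg] using
    multipliable_one_add_of_summable (f := fun n : ℕ ↦ -q ^ (c * n + d))
    (by simpa only [norm_neg] using summable_norm_pow_mul_add hq hc d)

lemma tprod_one_sub_pow_ne_zero (hq : ‖q‖ < 1) {c d : ℕ} (hc : c ≠ 0) (hd : d ≠ 0) :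
    ∏' n : ℕ, (1 - q ^ (c * n + d)) ≠ 0 := by
  simpa only [sub_eq_add_neg] using tprod_one_add_ne_zero_of_summable
    (f := fun n : ℕ ↦ -q ^ (c * n + d))
    (fun n ↦ by simpa only [sub_eq_add_neg] using one_sub_pow_ne_zero hq (by omega))
    (by simpa only [norm_neg] using summable_norm_pow_mul_add hq hc d)

lemma exists_norm_inv_prod_one_sub_pow_le (hq : ‖q‖ < 1) :
    ∃ C, ∀ n, ‖(∏ j ∈ range n, (1 - q ^ (2 * j + 2)))⁻¹‖ ≤ C := by
  have hlim : Tendsto (fun n ↦ (∏ j ∈ range n, (1 - q ^ (2 * j + 2)))⁻¹) atTop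
      (𝓝 (∏' j : ℕ, (1 - q ^ (2 * j + 2)))⁻¹) :=
    (multipliable_one_sub_pow hq two_ne_zero 2).hasProd.tendsto_prod_nat.inv₀
      (tprod_one_sub_pow_ne_zero hq two_ne_zero two_ne_zero)
  obtain ⟨C, hC⟩ := isBounded_iff_forall_norm_le.mp (Metric.isBounded_range_of_tendsto _ hlim)
  exact ⟨C, fun n ↦ hC _ (Set.mem_range_self n)⟩

lemma summable_eulerTerm (hq : ‖q‖ < 1) {z : 𝕜} (hz : ‖z‖ ≤ 1) : Summable (eulerTerm q z) := by
  obtain ⟨C, hC⟩ := exists_norm_inv_prod_one_sub_pow_le hq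
  exact .of_norm_bounded ((summable_geometric_of_lt_one (norm_nonneg q) hq).mul_left C)
    (norm_eulerTerm_le hq hC hz)

lemma tsum_eulerTerm_eq_mul (hq : ‖q‖ < 1) {z : 𝕜} (hz : ‖z‖ ≤ 1) :
    ∑' n, eulerTerm q z n = (1 + z * q) * ∑' n, eulerTerm q (z * q ^ 2) n := by
  have hzq : ‖z * q ^ 2‖ ≤ 1 := by
    rw [norm_mul, norm_pow]
    exact mul_le_one₀ hz (by positivity) (pow_le_one₀ (norm_nonneg q) hq.le)
  have hf := summable_eulerTerm hq hz
  have hg := summable_eulerTerm hq hzq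
  have hdiff : ∑' n, eulerTerm q z n - ∑' n, eulerTerm q (z * q ^ 2) n =
      z * q * ∑' n, eulerTerm q (z * q ^ 2) n := by
    rw [← hf.tsum_sub hg, (hf.sub hg).tsum_eq_zero_add]
    simp only [eulerTerm_succ_sub hq, tsum_mul_left]
    simp [eulerTerm]
  linear_combination hdiff

lemma tsum_eulerTerm_one_eq_prod_mul (hq : ‖q‖ < 1) (N : ℕ) :
    ∑' n, eulerTerm q 1 n =
      (∏ k ∈ range N, (1 + q ^ (2 * k + 1))) * ∑' n, eulerTerm q (q ^ (2 * N)) n := by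
  induction N with
  | zero => simp
  | succ N ih =>
    have hqN : ‖q ^ (2 * N)‖ ≤ 1 := by
      rw [norm_pow]; exact pow_le_one₀ (norm_nonneg q) hq.le
    rw [ih, tsum_eulerTerm_eq_mul hq hqN, prod_range_succ, ← pow_succ, ← pow_add, mul_add_one,
      mul_assoc]

lemma tendsto_tsum_eulerTerm_pow (hq : ‖q‖ < 1) :
    Tendsto (fun N : ℕ ↦ ∑' n, eulerTerm q (q ^ (2 * N)) n) atTop (𝓝 1) := by
  obtain ⟨C, hC⟩ := exists_norm_inv_prod_one_sub_pow_le hq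
  have hq2N : Tendsto (fun N : ℕ ↦ q ^ (2 * N)) atTop (𝓝 0) := by
    simpa only [pow_mul] using tendsto_pow_atTop_nhds_zero_of_norm_lt_one
      (by rw [norm_pow]; exact pow_lt_one₀ (norm_nonneg q) hq two_ne_zero)
  have hlim : ∑' n, eulerTerm q 0 n = 1 := by
    rw [tsum_eq_single 0 fun n hn ↦ by simp [eulerTerm, hn]]
    simp [eulerTerm]
  rw [← hlim]
  refine tendsto_tsum_of_dominated_convergence
    ((summable_geometric_of_lt_one (norm_nonneg q) hq).mul_left C) (fun n ↦ ?_)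
    (.of_forall fun N ↦ norm_eulerTerm_le hq hC
      (by rw [norm_pow]; exact pow_le_one₀ (norm_nonneg q) hq.le))
  have hcont : Continuous fun z ↦ eulerTerm q z n := by unfold eulerTerm; fun_prop
  exact hcont.tendsto 0 |>.comp hq2N

theorem tsum_eulerTerm_one (hq : ‖q‖ < 1) :
    ∑' n, eulerTerm q 1 n = ∏' k : ℕ, (1 + q ^ (2 * k + 1)) := by
  have hprod := (multipliable_one_add_pow hq two_ne_zero 1).hasProd.tendsto_prod_nat
  have hlim := (hprod.mul (tendsto_tsum_eulerTerm_pow hq)).congr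
    fun N ↦ (tsum_eulerTerm_one_eq_prod_mul hq N).symm
  simpa using tendsto_nhds_unique tendsto_const_nhds hlim

theorem tprod_one_add_pow_mul_tprod_one_sub_pow_odd (hq : ‖q‖ < 1) :
    (∏' k : ℕ, (1 + q ^ (k + 1))) * ∏' k : ℕ, (1 - q ^ (2 * k + 1)) = 1 := by
  have hsq : (∏' k : ℕ, (1 + q ^ (k + 1))) * ∏' k : ℕ, (1 - q ^ (k + 1)) =
      ∏' k : ℕ, (1 - q ^ (2 * k + 2)) := by
    have hadd : Multipliable fun k : ℕ ↦ 1 + q ^ (k + 1) := by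
      simpa using multipliable_one_add_pow hq one_ne_zero 1
    have hsub : Multipliable fun k : ℕ ↦ 1 - q ^ (k + 1) := by
      simpa using multipliable_one_sub_pow hq one_ne_zero 1
    rw [← hadd.tprod_mul hsub]
    exact tprod_congr fun k ↦ by ring
  have hsplit : (∏' k : ℕ, (1 - q ^ (2 * k + 1))) * ∏' k : ℕ, (1 - q ^ (2 * k + 2)) =
      ∏' k : ℕ, (1 - q ^ (k + 1)) :=
    tprod_even_mul_odd (f := fun k ↦ 1 - q ^ (k + 1))
      (multipliable_one_sub_pow hq two_ne_zero 1) (multipliable_one_sub_pow hq two_ne_zero 2)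
  refine mul_right_cancel₀ (tprod_one_sub_pow_ne_zero hq two_ne_zero two_ne_zero) ?_
  rw [one_mul, mul_assoc, hsplit, hsq]

theorem tprod_one_sub_pow_odd_eq (hq : ‖q‖ < 1) :
    ∏' k : ℕ, (1 - q ^ (2 * k + 1)) = (∏' k : ℕ, (1 - q ^ (6 * k + 1))) *
      (∏' k : ℕ, (1 - q ^ (6 * k + 3))) * ∏' k : ℕ, (1 - q ^ (6 * k + 5)) := by
  have hexp : ∀ i k : ℕ, 2 * (3 * k + i) + 1 = 6 * k + (2 * i + 1) := fun i k ↦ by ring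
  rw [tprod_eq_prod_range_tprod_mul_add 3 (multipliable_one_sub_pow hq two_ne_zero 1)
    fun i _ ↦ by
      simpa only [hexp] using multipliable_one_sub_pow hq (by norm_num : 6 ≠ 0) (2 * i + 1)]
  simp only [hexp, prod_range_succ, prod_range_zero, one_mul]

end QSeries

/-- The generating function for cylindric partitions of profile `c = (3,1)`,
`(∑ q^{n^2}/(q^2;q^2)_n) · (-q^2; q^2)_∞ / (q; q)_∞`, equals Borodin's infinite product
`1 / ((q; q)_∞ (q; q^6)_∞ (q^3; q^6)_∞ (q^5; q^6)_∞)`. -/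
theorem profile_three_one (q : ℂ) (hq : ‖q‖ < 1) :
    (∑' n : ℕ, q ^ (n ^ 2) / ∏ j ∈ Finset.range n, (1 - q ^ (2 * j + 2))) *
        (∏' k : ℕ, (1 + q ^ (2 * k + 2))) / (∏' k : ℕ, (1 - q ^ (k + 1))) =
      1 / ((∏' k : ℕ, (1 - q ^ (k + 1))) * (∏' k : ℕ, (1 - q ^ (6 * k + 1))) *
        (∏' k : ℕ, (1 - q ^ (6 * k + 3))) * ∏' k : ℕ, (1 - q ^ (6 * k + 5))) := by
  have heuler : ∑' n : ℕ, q ^ (n ^ 2) / ∏ j ∈ Finset.range n, (1 - q ^ (2 * j + 2)) =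
      ∏' k : ℕ, (1 + q ^ (2 * k + 1)) := by
    simpa [QSeries.eulerTerm] using QSeries.tsum_eulerTerm_one hq
  have hsplit : (∏' k : ℕ, (1 + q ^ (2 * k + 1))) * ∏' k : ℕ, (1 + q ^ (2 * k + 2)) =
      ∏' k : ℕ, (1 + q ^ (k + 1)) :=
    tprod_even_mul_odd (f := fun k ↦ 1 + q ^ (k + 1))
      (QSeries.multipliable_one_add_pow hq two_ne_zero 1)
      (QSeries.multipliable_one_add_pow hq two_ne_zero 2)
  have hinv := QSeries.tprod_one_add_pow_mul_tprod_one_sub_pow_odd hq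
  rw [QSeries.tprod_one_sub_pow_odd_eq hq] at hinv
  have hB : ∏' k : ℕ, (1 - q ^ (k + 1)) ≠ 0 := by
    simpa using QSeries.tprod_one_sub_pow_ne_zero hq one_ne_zero one_ne_zero
  have hC := QSeries.tprod_one_sub_pow_ne_zero hq (c := 6) (by norm_num) one_ne_zero
  have hD := QSeries.tprod_one_sub_pow_ne_zero hq (c := 6) (d := 3) (by norm_num) (by norm_num)
  have hE := QSeries.tprod_one_sub_pow_ne_zero hq (c := 6) (d := 5) (by norm_num) (by norm_num)
  rw [heuler, hsplit, div_eq_div_iff hB (by simp [hB, hC, hD, hE])]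
  linear_combination (∏' k : ℕ, (1 - q ^ (k + 1))) * hinv
end

section
/- (Lemma 1, second identity.) For every complex number q with |q| < 1, every natural number k ≥ 0 and every integer n ≥ 2, ( ∏_{j=0}^{n-1} q^{2k+2j+1} ) / ( ∏_{j=0}^{n} (1 + q^{2k+2j}) ) = ( q / (1 - q^{2n}) ) · ( - ( ∏_{j=1}^{n-1} q^{2k+2j+1} ) / ( ∏_{j=0}^{n-1} (1 + q^{2k+2j}) ) + ( ∏_{j=1}^{n-1} q^{2k+2j+1} ) / ( ∏_{j=1}^{n} (1 + q^{2k+2j}) ) ). Equivalently, the numerator of the left-hand side equals q^{2kn + n^2} and the numerators on the right-hand side equal q^{2k(n-1) + n^2 - 1}. -/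
open Finset

theorem Finset.prod_range_succ_eq_mul_prod_Icc {M : Type*} [CommMonoid M] (f : ℕ → M) (m : ℕ) :
    ∏ j ∈ range (m + 1), f j = f 0 * ∏ j ∈ Icc 1 m, f j := by
  rw [prod_range_eq_mul_Ico f (Nat.add_one_pos m), Ico_add_one_right_eq_Icc]

theorem one_add_pow_ne_zero_of_norm_lt_one {𝕜 : Type*} [NormedField 𝕜] [CharZero 𝕜] {q : 𝕜}
    (hq : ‖q‖ < 1) (m : ℕ) : 1 + q ^ m ≠ 0 := by
  rcases m.eq_zero_or_pos with rfl | hm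
  · norm_num
  · intro h
    have hnorm : ‖q ^ m‖ < 1 := by
      rw [norm_pow]; exact pow_lt_one₀ (norm_nonneg q) hq hm.ne'
    rw [eq_neg_of_add_eq_zero_right h, norm_neg, norm_one] at hnorm
    exact hnorm.false

theorem one_sub_pow_ne_zero_of_norm_lt_one {𝕜 : Type*} [NormedDivisionRing 𝕜] {q : 𝕜}
    (hq : ‖q‖ < 1) {m : ℕ} (hm : m ≠ 0) : 1 - q ^ m ≠ 0 := by
  intro h
  have hnorm : ‖q ^ m‖ < 1 := by
    rw [norm_pow]; exact pow_lt_one₀ (norm_nonneg q) hq hm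
  rw [← sub_eq_zero.mp h, norm_one] at hnorm
  exact hnorm.false

/-- Lemma 1, second identity: for `n ≥ 2`,
`(∏_{j=0}^{n-1} q^{2k+2j+1}) / (∏_{j=0}^{n} (1+q^{2k+2j}))
  = (q/(1-q^{2n})) (-(∏_{j=1}^{n-1} q^{2k+2j+1}) / (∏_{j=0}^{n-1} (1+q^{2k+2j}))
      + (∏_{j=1}^{n-1} q^{2k+2j+1}) / (∏_{j=1}^{n} (1+q^{2k+2j})))`. -/
theorem lemma1_second (q : ℂ) (hq : ‖q‖ < 1) (k : ℕ) (n : ℕ) (hn : 2 ≤ n) :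
    (∏ j ∈ Finset.range n, q ^ (2 * k + 2 * j + 1)) /
        ∏ j ∈ Finset.range (n + 1), (1 + q ^ (2 * k + 2 * j)) =
      q / (1 - q ^ (2 * n)) *
        (-(∏ j ∈ Finset.Icc 1 (n - 1), q ^ (2 * k + 2 * j + 1)) /
            (∏ j ∈ Finset.range n, (1 + q ^ (2 * k + 2 * j))) +
          (∏ j ∈ Finset.Icc 1 (n - 1), q ^ (2 * k + 2 * j + 1)) /
            ∏ j ∈ Finset.Icc 1 n, (1 + q ^ (2 * k + 2 * j))) := by
  obtain ⟨m, rfl⟩ : ∃ m, n = m + 1 := ⟨n - 1, by omega⟩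
  have hden : ∀ j : ℕ, 1 + q ^ (2 * k + 2 * j) ≠ 0 := fun j =>
    one_add_pow_ne_zero_of_norm_lt_one hq _
  have hfirst : 1 + q ^ (2 * k) ≠ 0 := one_add_pow_ne_zero_of_norm_lt_one hq _
  have hlast := hden (m + 1)
  have hmiddle : ∏ j ∈ Icc 1 m, (1 + q ^ (2 * k + 2 * j)) ≠ 0 :=
    prod_ne_zero_iff.mpr fun j _ => hden j
  have hratio : 1 - q ^ (2 * (m + 1)) ≠ 0 := one_sub_pow_ne_zero_of_norm_lt_one hq (by omega)
  rw [Nat.add_sub_cancel, prod_range_succ_eq_mul_prod_Icc, prod_range_succ_eq_mul_prod_Icc,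
    prod_range_succ_eq_mul_prod_Icc, prod_Icc_succ_top (by omega)]
  simp only [mul_zero, add_zero]
  -- With a = q^(2k), r = q^(2n), the bracket is a multiple of
  -- 1/(1 + a r) - 1/(1 + a) = a (1 - r)/((1 + a)(1 + a r)), and q * a is the peeled-off factor.
  field_simp
  ring
end

section
/- (Lemma 2.) For every complex number q with |q| < 1 and every integer m ≥ 1, ∑_{k=1}^{∞} q^{2km + m^2} / ( ∏_{j=0}^{m} (1 + q^{2k+2j}) ) = ( q^{2m} / (1 - q^{2m}) ) · q^{m^2} / ( ∏_{j=1}^{m} (1 + q^{2j}) ). Here q^{2km + m^2} = q^{2k+1} · q^{2k+3} ⋯ q^{2k+2m-1} and q^{m^2} = q^1 · q^3 ⋯ q^{2m-1}; the series converges absolutely since |q| < 1. -/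
/-! The summand telescopes. With `g k = q^(2km + m²) / (-q^(2k); q²)_m`, the identity
`(-q^(2k); q²)_m (1 + q^(2k+2m)) = (1 + q^(2k)) (-q^(2k+2); q²)_m` makes the `k`-th term equal to
`(g k - g (k+1)) / (1 - q^(2m))`. The denominators stay bounded away from `0` while the numerators
decay like `|q|^(2km)`, so `g` is summable and the series sums to `g 1 / (1 - q^(2m))`. -/

open Finset

/-- The q-Pochhammer symbol `(-q^n; q²)_m`. -/
def qPochhammerNegSq {K : Type*} [CommRing K] (q : K) (n m : ℕ) : K :=
  ∏ j ∈ range m, (1 + q ^ (n + 2 * j))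

namespace qPochhammerNegSq

section Field
variable {K : Type*} [Field K] {q : K} {n m : ℕ}

theorem succ : qPochhammerNegSq q n (m + 1) = qPochhammerNegSq q n m * (1 + q ^ (n + 2 * m)) :=
  prod_range_succ _ _

theorem succ' : qPochhammerNegSq q n (m + 1) = (1 + q ^ n) * qPochhammerNegSq q (n + 2) m := by
  rw [qPochhammerNegSq, prod_range_succ', mul_comm]
  simp only [qPochhammerNegSq, mul_zero, add_zero, mul_add, mul_one, add_assoc, add_comm 2]

theorem two_eq_prod_Icc : qPochhammerNegSq q 2 m = ∏ j ∈ Icc 1 m, (1 + q ^ (2 * j)) := by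
  induction m with
  | zero => rfl
  | succ m ih => rw [succ, ih, prod_Icc_succ_top (by omega), mul_add_one, add_comm 2]

theorem div_succ_eq_sub_div (c : K) (hA : qPochhammerNegSq q n m ≠ 0)
    (hB : qPochhammerNegSq q (n + 2) m ≠ 0) (hy : 1 - q ^ (2 * m) ≠ 0) :
    c / qPochhammerNegSq q n (m + 1) =
      (c / qPochhammerNegSq q n m - c * q ^ (2 * m) / qPochhammerNegSq q (n + 2) m) /
        (1 - q ^ (2 * m)) := by
  have h := succ.symm.trans (succ' (q := q) (n := n) (m := m))
  rw [pow_add] at h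
  have hu : 1 + q ^ n ≠ 0 := by
    intro hu
    have hv : 1 + q ^ n * q ^ (2 * m) = 0 := by
      simpa [hu, hA] using h
    exact hy (by linear_combination hv - q ^ (2 * m) * hu)
  rw [succ']
  field_simp
  linear_combination c * h

end Field

section Normed
variable {𝕜 : Type*} [NormedField 𝕜] {q : 𝕜} {n : ℕ} (m : ℕ)

theorem one_sub_norm_pow_le_norm (hq : ‖q‖ < 1) (hn : 1 ≤ n) :
    (1 - ‖q‖) ^ m ≤ ‖qPochhammerNegSq q n m‖ := by
  rw [qPochhammerNegSq, norm_prod]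
  conv_lhs => rw [← card_range m, ← prod_const]
  refine prod_le_prod (fun _ _ => sub_nonneg.mpr hq.le) fun j _ => ?_
  calc 1 - ‖q‖ ≤ 1 - ‖q ^ (n + 2 * j)‖ := by
        rw [norm_pow]
        linarith [pow_le_of_le_one (norm_nonneg q) hq.le (by omega : n + 2 * j ≠ 0)]
    _ ≤ ‖1 + q ^ (n + 2 * j)‖ := by
        simpa using norm_sub_norm_le (1 : 𝕜) (-q ^ (n + 2 * j))

theorem ne_zero (hq : ‖q‖ < 1) (hn : 1 ≤ n) : qPochhammerNegSq q n m ≠ 0 :=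
  norm_pos_iff.mp <| (pow_pos (by linarith) m).trans_le (one_sub_norm_pow_le_norm m hq hn)

end Normed

end qPochhammerNegSq

theorem hasSum_sub_succ {G : Type*} [AddCommGroup G] [TopologicalSpace G]
    [IsTopologicalAddGroup G] {f : ℕ → G} (hf : Summable f) :
    HasSum (fun k => f k - f (k + 1)) (f 0) := by
  have hshift : HasSum (fun k => f (k + 1)) (∑' k, f k - f 0) := by
    simpa using (hasSum_nat_add_iff' 1).2 hf.hasSum
  simpa using hf.hasSum.sub hshift

open qPochhammerNegSq in
theorem summable_pow_div_qPochhammerNegSq {𝕜 : Type*} [NormedField 𝕜] [CompleteSpace 𝕜]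
    {q : 𝕜} (hq : ‖q‖ < 1) {m : ℕ} (hm : 1 ≤ m) (a : ℕ) :
    Summable fun k : ℕ => q ^ (2 * (k + 1) * m + a) / qPochhammerNegSq q (2 * (k + 1)) m := by
  have hr : 0 < 1 - ‖q‖ := by linarith
  refine .of_norm_bounded ((summable_geometric_of_lt_one (by positivity)
    (pow_lt_one₀ (norm_nonneg q) hq (by omega : 2 * m ≠ 0))).mul_left
      (‖q‖ ^ a / (1 - ‖q‖) ^ m)) fun k => ?_
  rw [norm_div, norm_pow, div_mul_eq_mul_div, ← pow_mul, ← pow_add]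
  refine div_le_div₀ (by positivity) (pow_le_pow_of_le_one (norm_nonneg q) hq.le ?_)
    (pow_pos hr m) (one_sub_norm_pow_le_norm m hq (by omega))
  nlinarith

open qPochhammerNegSq in
/-- Lemma 2: for `m ≥ 1`,
`∑_{k=1}^∞ q^{2km+m^2} / ∏_{j=0}^{m} (1+q^{2k+2j})
  = (q^{2m}/(1-q^{2m})) · q^{m^2} / ∏_{j=1}^{m} (1+q^{2j})`.
The sum over `k ≥ 1` is written as a sum over `k : ℕ` with `k` replaced by `k + 1`. -/
theorem lemma2 (q : ℂ) (hq : ‖q‖ < 1) (m : ℕ) (hm : 1 ≤ m) :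
    (∑' k : ℕ, q ^ (2 * (k + 1) * m + m ^ 2) /
        ∏ j ∈ Finset.range (m + 1), (1 + q ^ (2 * (k + 1) + 2 * j))) =
      q ^ (2 * m) / (1 - q ^ (2 * m)) *
        (q ^ (m ^ 2) / ∏ j ∈ Finset.Icc 1 m, (1 + q ^ (2 * j))) := by
  have hy : 1 - q ^ (2 * m) ≠ 0 := by
    refine sub_ne_zero.mpr fun h => ?_
    have h' := congrArg norm h
    rw [norm_one, norm_pow] at h'
    exact (pow_lt_one₀ (norm_nonneg q) hq (by omega : 2 * m ≠ 0)).ne' h'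
  set g : ℕ → ℂ := fun k => q ^ (2 * (k + 1) * m + m ^ 2) / qPochhammerNegSq q (2 * (k + 1)) m
  have hterm : ∀ k : ℕ, q ^ (2 * (k + 1) * m + m ^ 2) / qPochhammerNegSq q (2 * (k + 1)) (m + 1) =
      (g k - g (k + 1)) / (1 - q ^ (2 * m)) := by
    intro k
    rw [div_succ_eq_sub_div _ (ne_zero m hq (by omega)) (ne_zero m hq (by omega)) hy, ← pow_add]
    congr 3; ring
  calc _ = ∑' k : ℕ, (g k - g (k + 1)) / (1 - q ^ (2 * m)) := tsum_congr hterm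
    _ = g 0 / (1 - q ^ (2 * m)) :=
        ((hasSum_sub_succ (summable_pow_div_qPochhammerNegSq hq hm _)).div_const _).tsum_eq
    _ = _ := by
        rw [← two_eq_prod_Icc]
        simp only [g, zero_add, mul_one, pow_add]
        ring
end

section
/- (Intermediate identity (18) in the proof of Lemma 3.) For every complex number q with |q| < 1 and all integers k₁ ≥ 1, m₁ ≥ 1 and m₂ ≥ 1, ∑_{k₂=1}^{∞} q^{m₂(2k₁ + 2k₂ + 2m₁) + m₂^2} / ( ∏_{j=0}^{m₂} (1 + q^{2k₁ + 2k₂ + 2m₁ + 2j}) ) = q^{2m₂} · q^{m₂(2k₁ + 2m₁) + m₂^2} / ( (1 - q^{2m₂}) · ∏_{j=1}^{m₂} (1 + q^{2k₁ + 2m₁ + 2j}) ). Here q^{m₂(2k₁+2k₂+2m₁)+m₂^2} = q^{2k₁+2k₂+2m₁+1} · q^{2k₁+2k₂+2m₁+3} ⋯ q^{2k₁+2k₂+2m₁+2m₂-1}. -/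
/-!
With `r = q²` and `x = q^{2k₁+2m₁}`, the summand for `k₂ = n + 1` is `q^{m₂²} r^{m₂}` times
`yₙ^m / ∏_{j=1}^{m+1} (1 + yₙ r^j)`, where `yₙ = x rⁿ` and `m = m₂`. For
`g(y) = y^m / ∏_{j=1}^{m} (1 + y r^j)` (`qRatio r m y`), splitting off the last or the first
factor of `∏_{j=1}^{m+1} (1 + y r^j)` gives `g(y) - g(r y) = (1 - r^m) y^m / ∏_{j=1}^{m+1} (1 + y r^j)`,
so the series telescopes to `g(x) / (1 - r^m)`, since `g(yₙ) → g(0) = 0`.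
-/

open Finset Filter Topology

section Algebra

variable {K : Type*} [Field K]

def qRatio (r : K) (m : ℕ) (x : K) : K :=
  x ^ m / ∏ j ∈ range m, (1 + x * r ^ (j + 1))

theorem qRatio_sub_qRatio_mul (r x : K) (m : ℕ)
    (h : ∏ j ∈ range (m + 1), (1 + x * r ^ (j + 1)) ≠ 0) :
    qRatio r m x - qRatio r m (r * x) =
      (1 - r ^ m) * x ^ m / ∏ j ∈ range (m + 1), (1 + x * r ^ (j + 1)) := by
  have hlast := prod_range_succ (fun j ↦ 1 + x * r ^ (j + 1)) m
  have hfirst : ∏ j ∈ range (m + 1), (1 + x * r ^ (j + 1)) =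
      (1 + x * r) * ∏ j ∈ range m, (1 + r * x * r ^ (j + 1)) := by
    rw [prod_range_succ', mul_comm]
    congr 1
    · ring
    · exact prod_congr rfl fun j _ ↦ by ring
  have hA : ∏ j ∈ range m, (1 + x * r ^ (j + 1)) ≠ 0 := by
    rw [hlast] at h; exact left_ne_zero_of_mul h
  have hB : ∏ j ∈ range m, (1 + r * x * r ^ (j + 1)) ≠ 0 := by
    rw [hfirst] at h; exact right_ne_zero_of_mul h
  rw [qRatio, qRatio, div_sub_div _ _ hA hB, div_eq_div_iff (mul_ne_zero hA hB) h]
  linear_combination (x ^ m * ∏ j ∈ range m, (1 + r * x * r ^ (j + 1))) * hlast -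
    ((∏ j ∈ range m, (1 + x * r ^ (j + 1))) * (r * x) ^ m) * hfirst

end Algebra

section Analysis

variable {𝕜 : Type*} [NormedField 𝕜]

theorem one_add_ne_zero_of_norm_lt_one {z : 𝕜} (hz : ‖z‖ < 1) : 1 + z ≠ 0 := by
  intro h
  rw [eq_neg_of_add_eq_zero_right h, norm_neg, norm_one] at hz
  exact lt_irrefl _ hz

theorem tendsto_prod_one_add_mul_pow {x : ℕ → 𝕜} (hx : Tendsto x atTop (𝓝 0)) (r : 𝕜) (k : ℕ) :
    Tendsto (fun n ↦ ∏ j ∈ range k, (1 + x n * r ^ (j + 1))) atTop (𝓝 1) := by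
  have hcont : Continuous fun y : 𝕜 ↦ ∏ j ∈ range k, (1 + y * r ^ (j + 1)) := by fun_prop
  simpa [Function.comp_def] using (hcont.tendsto 0).comp hx

theorem tendsto_qRatio {x : ℕ → 𝕜} (hx : Tendsto x atTop (𝓝 0)) (r : 𝕜) {m : ℕ} (hm : m ≠ 0) :
    Tendsto (fun n ↦ qRatio r m (x n)) atTop (𝓝 0) := by
  have h := (hx.pow m).div (tendsto_prod_one_add_mul_pow hx r m) one_ne_zero
  rwa [zero_pow hm, zero_div] at h

theorem summable_pow_mul_of_tendsto [CompleteSpace 𝕜] {ρ : 𝕜} (hρ : ‖ρ‖ < 1) {c : ℕ → 𝕜}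
    {l : 𝕜} (hc : Tendsto c atTop (𝓝 l)) : Summable fun n ↦ ρ ^ n * c n := by
  refine summable_of_isBigO_nat (summable_geometric_of_lt_one (norm_nonneg ρ) hρ) ?_
  simpa using (Asymptotics.isBigO_refl (fun n ↦ ρ ^ n) atTop).norm_right.mul (hc.isBigO_one ℝ)

theorem hasSum_sub_succ_of_tendsto {f : ℕ → 𝕜} {l : 𝕜} (hs : Summable fun n ↦ f n - f (n + 1))
    (hf : Tendsto f atTop (𝓝 l)) : HasSum (fun n ↦ f n - f (n + 1)) (f 0 - l) := by
  rw [hs.hasSum_iff_tendsto_nat]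
  simpa only [sum_range_sub'] using tendsto_const_nhds.sub hf

theorem hasSum_pow_div_prod_one_add [CompleteSpace 𝕜] {r x : 𝕜} (hr : ‖r‖ < 1) (hx : ‖x‖ ≤ 1)
    {m : ℕ} (hm : m ≠ 0) :
    HasSum (fun n ↦ (x * r ^ n) ^ m / ∏ j ∈ range (m + 1), (1 + x * r ^ n * r ^ (j + 1)))
      (qRatio r m x / (1 - r ^ m)) := by
  have hrm_lt : ‖r ^ m‖ < 1 := by rw [norm_pow]; exact pow_lt_one₀ (norm_nonneg r) hr hm
  have hrm : 1 - r ^ m ≠ 0 := by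
    simpa [sub_eq_add_neg] using one_add_ne_zero_of_norm_lt_one (z := -r ^ m) (by rwa [norm_neg])
  have hy : Tendsto (fun n ↦ x * r ^ n) atTop (𝓝 0) := by
    simpa using tendsto_const_nhds.mul (tendsto_pow_atTop_nhds_zero_of_norm_lt_one hr)
  have hden (n : ℕ) : ∏ j ∈ range (m + 1), (1 + x * r ^ n * r ^ (j + 1)) ≠ 0 := by
    refine prod_ne_zero_iff.2 fun j _ ↦ one_add_ne_zero_of_norm_lt_one ?_
    calc ‖x * r ^ n * r ^ (j + 1)‖ ≤ ‖r‖ ^ (j + 1) := by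
          rw [norm_mul, norm_mul, norm_pow, norm_pow]
          exact mul_le_of_le_one_left (by positivity)
            (mul_le_one₀ hx (by positivity) (pow_le_one₀ (norm_nonneg r) hr.le))
      _ < 1 := pow_lt_one₀ (norm_nonneg r) hr j.succ_ne_zero
  have hterm (n : ℕ) : (x * r ^ n) ^ m / ∏ j ∈ range (m + 1), (1 + x * r ^ n * r ^ (j + 1)) =
      (qRatio r m (x * r ^ n) - qRatio r m (x * r ^ (n + 1))) / (1 - r ^ m) := by
    rw [pow_succ, ← mul_assoc, mul_comm _ r, qRatio_sub_qRatio_mul _ _ _ (hden n), mul_div_assoc,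
      mul_div_cancel_left₀ _ hrm]
  have hsum : Summable fun n ↦ (x * r ^ n) ^ m /
      ∏ j ∈ range (m + 1), (1 + x * r ^ n * r ^ (j + 1)) := by
    have hc := (tendsto_const_nhds (x := x ^ m)).div
      (tendsto_prod_one_add_mul_pow hy r (m + 1)) one_ne_zero
    refine (summable_pow_mul_of_tendsto hrm_lt hc).congr fun n ↦ ?_
    simp only [Pi.div_apply]
    ring
  simp_rw [hterm] at hsum ⊢
  have htele := (hasSum_sub_succ_of_tendsto ((summable_div_const_iff hrm).1 hsum)
    (tendsto_qRatio hy r hm)).div_const (1 - r ^ m)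
  rwa [pow_zero, mul_one, sub_zero] at htele

end Analysis

theorem lemma3_intermediate_general (q : ℂ) (hq : ‖q‖ < 1)
    (k₁ m₁ m₂ : ℕ) (hm₂ : 1 ≤ m₂) :
    (∑' k₂ : ℕ, q ^ (m₂ * (2 * k₁ + 2 * (k₂ + 1) + 2 * m₁) + m₂ ^ 2) /
        ∏ j ∈ Finset.range (m₂ + 1), (1 + q ^ (2 * k₁ + 2 * (k₂ + 1) + 2 * m₁ + 2 * j))) =
      q ^ (2 * m₂) * q ^ (m₂ * (2 * k₁ + 2 * m₁) + m₂ ^ 2) /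
        ((1 - q ^ (2 * m₂)) * ∏ j ∈ Finset.Icc 1 m₂, (1 + q ^ (2 * k₁ + 2 * m₁ + 2 * j))) := by
  have hr : ‖q ^ 2‖ < 1 := by rw [norm_pow]; exact pow_lt_one₀ (norm_nonneg q) hq two_ne_zero
  have hx : ‖q ^ (2 * k₁ + 2 * m₁)‖ ≤ 1 := by
    rw [norm_pow]; exact pow_le_one₀ (norm_nonneg q) hq.le
  have key := (hasSum_pow_div_prod_one_add hr hx (m := m₂) (by omega)).mul_left
    (q ^ m₂ ^ 2 * (q ^ 2) ^ m₂)
  have hsummand (n : ℕ) : q ^ (m₂ * (2 * k₁ + 2 * (n + 1) + 2 * m₁) + m₂ ^ 2) /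
      ∏ j ∈ range (m₂ + 1), (1 + q ^ (2 * k₁ + 2 * (n + 1) + 2 * m₁ + 2 * j)) =
      q ^ m₂ ^ 2 * (q ^ 2) ^ m₂ * ((q ^ (2 * k₁ + 2 * m₁) * (q ^ 2) ^ n) ^ m₂ /
        ∏ j ∈ range (m₂ + 1), (1 + q ^ (2 * k₁ + 2 * m₁) * (q ^ 2) ^ n * (q ^ 2) ^ (j + 1))) := by
    rw [mul_div_assoc']
    congr 1
    · ring
    · exact prod_congr rfl fun j _ ↦ by ring
  have hIcc : ∏ j ∈ Icc 1 m₂, (1 + q ^ (2 * k₁ + 2 * m₁ + 2 * j)) =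
      ∏ j ∈ range m₂, (1 + q ^ (2 * k₁ + 2 * m₁) * (q ^ 2) ^ (j + 1)) := by
    rw [← Ico_add_one_right_eq_Icc, prod_Ico_eq_prod_range, Nat.add_sub_cancel]
    exact prod_congr rfl fun j _ ↦ by ring
  simp_rw [hsummand, key.tsum_eq, qRatio, hIcc, div_div, mul_div_assoc']
  congr 1 <;> ring

/-- Identity (18) in the proof of Lemma 3: for `k₁, m₁, m₂ ≥ 1`,
`∑_{k₂=1}^∞ q^{m₂(2k₁+2k₂+2m₁)+m₂^2} / ∏_{j=0}^{m₂} (1+q^{2k₁+2k₂+2m₁+2j})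
  = q^{2m₂} q^{m₂(2k₁+2m₁)+m₂^2} / ((1-q^{2m₂}) ∏_{j=1}^{m₂} (1+q^{2k₁+2m₁+2j}))`.
The sum over `k₂ ≥ 1` is written as a sum over `k₂ : ℕ` with `k₂` replaced by `k₂ + 1`. -/
theorem lemma3_intermediate (q : ℂ) (hq : ‖q‖ < 1)
    (k₁ m₁ m₂ : ℕ) (hk₁ : 1 ≤ k₁) (hm₁ : 1 ≤ m₁) (hm₂ : 1 ≤ m₂) :
    (∑' k₂ : ℕ, q ^ (m₂ * (2 * k₁ + 2 * (k₂ + 1) + 2 * m₁) + m₂ ^ 2) /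
        ∏ j ∈ Finset.range (m₂ + 1), (1 + q ^ (2 * k₁ + 2 * (k₂ + 1) + 2 * m₁ + 2 * j))) =
      q ^ (2 * m₂) * q ^ (m₂ * (2 * k₁ + 2 * m₁) + m₂ ^ 2) /
        ((1 - q ^ (2 * m₂)) * ∏ j ∈ Finset.Icc 1 m₂, (1 + q ^ (2 * k₁ + 2 * m₁ + 2 * j))) :=
  lemma3_intermediate_general q hq k₁ m₁ m₂ hm₂
end

section
/- (Lemma 3.) For every complex number q with |q| < 1 and all integers m₁ ≥ 1 and m₂ ≥ 1, ∑_{k₂=1}^{∞} ∑_{k₁=1}^{∞} q^{2k₁(m₁+m₂) + 2k₂ m₂ + (m₁+m₂)^2} / ( ∏_{j=0}^{m₁} (1 + q^{2k₁+2j}) · ∏_{j=0}^{m₂} (1 + q^{2k₁+2k₂+2m₁+2j}) ) = q^{2(m₁+m₂)} · q^{2m₂} · q^{(m₁+m₂)^2} / ( (1 - q^{2(m₁+m₂)}) · (1 - q^{2m₂}) · ∏_{j=1}^{m₁+m₂} (1 + q^{2j}) ). Here the numerator of the summand is q^{2k₁+1} q^{2k₁+3} ⋯ q^{2k₁+2m₁-1}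 · q^{2k₁+2k₂+2m₁+1} ⋯ q^{2k₁+2k₂+2m₁+2m₂-1}, and q^{(m₁+m₂)^2} = q^1 q^3 ⋯ q^{2(m₁+m₂)-1}. -/
/-!
Put `x = q²` and `P s n = ∏_{j<n} (1 + x^(s+j))`. Since `P s (n+1) = P s n (1 + x^(s+n)) =
(1 + x^s) P (s+1) n`, the terms `a k = x^(kn) / P (s+k) n` satisfy
`a k - a (k+1) = (1 - x^n) x^(kn) / P (s+k) (n+1)`, so `∑_k x^(kn) / P (s+k) (n+1)` telescopes to
`1 / ((1 - x^n) P s n)`. The sum over `k₂` is such a series with `n = m₂`; the factor it leaves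
combines with the `k₁`-product into a single `P (1+k₁) (m₁+m₂+1)`, and the sum over `k₁` telescopes
once more, with `n = m₁ + m₂`. Interchanging the two sums is legitimate because every term is
bounded by a constant times `‖x‖^(k₁+k₂)`.
-/

open Finset Filter Topology

/-- `negQPochhammer x s n` is the `q`-Pochhammer symbol `(-x^s; x)_n`. -/
def negQPochhammer {R : Type*} [CommSemiring R] (x : R) (s n : ℕ) : R :=
  ∏ j ∈ range n, (1 + x ^ (s + j))

section Algebra

variable {R : Type*} [CommSemiring R]

theorem negQPochhammer_add (x : R) (s m n : ℕ) :
    negQPochhammer x s (m + n) = negQPochhammer x s m * negQPochhammer x (s + m) n := by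
  simp only [negQPochhammer, prod_range_add, add_assoc]

theorem negQPochhammer_succ (x : R) (s n : ℕ) :
    negQPochhammer x s (n + 1) = negQPochhammer x s n * (1 + x ^ (s + n)) :=
  prod_range_succ _ _

theorem negQPochhammer_succ' (x : R) (s n : ℕ) :
    negQPochhammer x s (n + 1) = (1 + x ^ s) * negQPochhammer x (s + 1) n := by
  rw [add_comm n, negQPochhammer_add, mul_comm]
  simp [negQPochhammer, mul_comm]

theorem negQPochhammer_sq (q : R) (s n : ℕ) :
    negQPochhammer (q ^ 2) s n = ∏ j ∈ range n, (1 + q ^ (2 * s + 2 * j)) := by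
  simp only [negQPochhammer, ← pow_mul, mul_add]

end Algebra

theorem one_sub_pow_mul_pow_mul_div_negQPochhammer {K : Type*} [Field K] (x : K) (s k n : ℕ)
    (h : negQPochhammer x (s + k) (n + 1) ≠ 0) :
    (1 - x ^ n) * (x ^ (k * n) / negQPochhammer x (s + k) (n + 1)) =
      x ^ (k * n) / negQPochhammer x (s + k) n -
        x ^ ((k + 1) * n) / negQPochhammer x (s + (k + 1)) n := by
  have hu₁ : 1 + x ^ (s + k + n) ≠ 0 := right_ne_zero_of_mul (negQPochhammer_succ x _ n ▸ h)
  have hu : 1 + x ^ (s + k) ≠ 0 := left_ne_zero_of_mul (negQPochhammer_succ' x _ n ▸ h)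
  have hk : x ^ (k * n) / negQPochhammer x (s + k) n =
      x ^ (k * n) * (1 + x ^ (s + k + n)) / negQPochhammer x (s + k) (n + 1) := by
    rw [negQPochhammer_succ, mul_div_mul_right _ _ hu₁]
  have hk' : x ^ ((k + 1) * n) / negQPochhammer x (s + (k + 1)) n =
      x ^ ((k + 1) * n) * (1 + x ^ (s + k)) / negQPochhammer x (s + k) (n + 1) := by
    rw [negQPochhammer_succ', mul_comm (1 + _), mul_div_mul_right _ _ hu, add_assoc]
  rw [hk, hk']
  ring

section Normed

variable {𝕜 : Type*} [NormedField 𝕜]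

theorem one_sub_norm_le_norm_one_add_pow {x : 𝕜} (hx : ‖x‖ ≤ 1) {e : ℕ} (he : e ≠ 0) :
    1 - ‖x‖ ≤ ‖1 + x ^ e‖ :=
  calc 1 - ‖x‖ ≤ ‖(1 : 𝕜)‖ - ‖-x ^ e‖ := by
        rw [norm_one, norm_neg, norm_pow]
        gcongr
        exact pow_le_of_le_one (norm_nonneg x) hx he
    _ ≤ ‖1 + x ^ e‖ := by simpa using norm_sub_norm_le (1 : 𝕜) (-x ^ e)

theorem one_sub_norm_pow_le_norm_negQPochhammer {x : 𝕜} (hx : ‖x‖ ≤ 1) {s : ℕ} (hs : s ≠ 0)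
    (n : ℕ) : (1 - ‖x‖) ^ n ≤ ‖negQPochhammer x s n‖ := by
  rw [negQPochhammer, norm_prod, ← card_range n, ← prod_const, card_range]
  exact prod_le_prod (fun _ _ => by linarith) fun j _ =>
    one_sub_norm_le_norm_one_add_pow hx (by omega)

theorem negQPochhammer_ne_zero {x : 𝕜} (hx : ‖x‖ < 1) {s : ℕ} (hs : s ≠ 0) (n : ℕ) :
    negQPochhammer x s n ≠ 0 :=
  norm_pos_iff.mp <| (pow_pos (sub_pos.mpr hx) n).trans_le <|
    one_sub_norm_pow_le_norm_negQPochhammer hx.le hs n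

theorem norm_pow_mul_div_negQPochhammer_le {x : 𝕜} (hx : ‖x‖ < 1) {s n : ℕ} (hs : s ≠ 0)
    (hn : n ≠ 0) (k m : ℕ) :
    ‖x ^ (k * n) / negQPochhammer x s m‖ ≤ ((1 - ‖x‖) ^ m)⁻¹ * ‖x‖ ^ k := by
  rw [norm_div, norm_pow, div_eq_inv_mul]
  gcongr ?_ * ?_
  · exact inv_anti₀ (pow_pos (sub_pos.mpr hx) m)
      (one_sub_norm_pow_le_norm_negQPochhammer hx.le hs m)
  · exact pow_le_pow_of_le_one (norm_nonneg x) hx.le (Nat.le_mul_of_pos_right k (by omega))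

theorem one_sub_pow_ne_zero {x : 𝕜} (hx : ‖x‖ < 1) {n : ℕ} (hn : n ≠ 0) : 1 - x ^ n ≠ 0 := by
  refine sub_ne_zero.mpr fun h => ?_
  have := pow_lt_one₀ (norm_nonneg x) hx hn
  rw [← norm_pow, ← h, norm_one] at this
  exact this.false

variable [CompleteSpace 𝕜]

theorem hasSum_pow_mul_div_negQPochhammer {x : 𝕜} (hx : ‖x‖ < 1) {s n : ℕ} (hs : s ≠ 0)
    (hn : n ≠ 0) :
    HasSum (fun k => x ^ (k * n) / negQPochhammer x (s + k) (n + 1))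
      (1 / ((1 - x ^ n) * negQPochhammer x s n)) := by
  set a : ℕ → 𝕜 := fun k => x ^ (k * n) / negQPochhammer x (s + k) n
  have hxn := one_sub_pow_ne_zero hx hn
  have geom := summable_geometric_of_lt_one (norm_nonneg x) hx
  have hsummable : Summable fun k => x ^ (k * n) / negQPochhammer x (s + k) (n + 1) :=
    .of_norm_bounded (geom.mul_left _) fun k =>
      norm_pow_mul_div_negQPochhammer_le hx (by omega) hn k (n + 1)
  have ha : Tendsto a atTop (𝓝 0) := by
    refine squeeze_zero_norm (fun k => norm_pow_mul_div_negQPochhammer_le hx (by omega) hn k n) ?_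
    simpa using (tendsto_pow_atTop_nhds_zero_of_lt_one (norm_nonneg x) hx).const_mul
      ((1 - ‖x‖) ^ n)⁻¹
  have hpartial : ∀ N, ∑ k ∈ range N, x ^ (k * n) / negQPochhammer x (s + k) (n + 1) =
      (a 0 - a N) / (1 - x ^ n) := fun N => by
    rw [eq_div_iff hxn, sum_mul, ← sum_range_sub']
    refine sum_congr rfl fun k _ => ?_
    rw [mul_comm]
    exact one_sub_pow_mul_pow_mul_div_negQPochhammer x s k n
      (negQPochhammer_ne_zero hx (by omega) _)
  rw [hsummable.hasSum_iff_tendsto_nat, funext hpartial]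
  convert (ha.const_sub (a 0)).div_const (1 - x ^ n) using 2
  simp [a, div_mul_eq_div_div_swap]

theorem tsum_tsum_pow_mul_div_negQPochhammer {x : 𝕜} (hx : ‖x‖ < 1) (m₁ : ℕ) {m₂ : ℕ}
    (hm₂ : m₂ ≠ 0) :
    ∑' k₂ : ℕ, ∑' k₁ : ℕ, x ^ (k₁ * (m₁ + m₂)) / negQPochhammer x (1 + k₁) (m₁ + 1) *
        (x ^ (k₂ * m₂) / negQPochhammer x (1 + k₁ + (m₁ + 1) + k₂) (m₂ + 1)) =
      1 / ((1 - x ^ (m₁ + m₂)) * (1 - x ^ m₂) * negQPochhammer x 1 (m₁ + m₂)) := by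
  have hinner : ∀ k₁ : ℕ, HasSum
      (fun k₂ => x ^ (k₁ * (m₁ + m₂)) / negQPochhammer x (1 + k₁) (m₁ + 1) *
        (x ^ (k₂ * m₂) / negQPochhammer x (1 + k₁ + (m₁ + 1) + k₂) (m₂ + 1)))
      (x ^ (k₁ * (m₁ + m₂)) / negQPochhammer x (1 + k₁) (m₁ + m₂ + 1) / (1 - x ^ m₂)) :=
    fun k₁ => by
      have hvalue : x ^ (k₁ * (m₁ + m₂)) / negQPochhammer x (1 + k₁) (m₁ + m₂ + 1) / (1 - x ^ m₂) =
          x ^ (k₁ * (m₁ + m₂)) / negQPochhammer x (1 + k₁) (m₁ + 1) *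
            (1 / ((1 - x ^ m₂) * negQPochhammer x (1 + k₁ + (m₁ + 1)) m₂)) := by
        rw [show m₁ + m₂ + 1 = m₁ + 1 + m₂ by omega, negQPochhammer_add]
        simp only [div_eq_mul_inv, one_mul, mul_inv]
        ring
      rw [hvalue]
      exact (hasSum_pow_mul_div_negQPochhammer hx (by omega) hm₂).mul_left _
  have houter := (hasSum_pow_mul_div_negQPochhammer hx one_ne_zero
    (n := m₁ + m₂) (by omega)).div_const (1 - x ^ m₂)
  have hsummable : Summable (Function.uncurry fun k₁ k₂ : ℕ =>
      x ^ (k₁ * (m₁ + m₂)) / negQPochhammer x (1 + k₁) (m₁ + 1) *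
        (x ^ (k₂ * m₂) / negQPochhammer x (1 + k₁ + (m₁ + 1) + k₂) (m₂ + 1))) := by
    have geom := summable_geometric_of_lt_one (norm_nonneg x) hx
    have hC : ∀ m k, 0 ≤ ((1 - ‖x‖) ^ m)⁻¹ * ‖x‖ ^ k := fun m k =>
      mul_nonneg (inv_nonneg.mpr (pow_nonneg (sub_nonneg.mpr hx.le) m))
        (pow_nonneg (norm_nonneg x) k)
    refine .of_norm_bounded ((geom.mul_left _).mul_of_nonneg (geom.mul_left _)
      (hC (m₁ + 1)) (hC (m₂ + 1))) fun ⟨k₁, k₂⟩ => ?_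
    rw [Function.uncurry_apply_pair, norm_mul]
    exact mul_le_mul (norm_pow_mul_div_negQPochhammer_le hx (by omega) (by omega) _ _)
      (norm_pow_mul_div_negQPochhammer_le hx (by omega) hm₂ _ _) (norm_nonneg _) (hC _ _)
  rw [hsummable.tsum_comm, tsum_congr fun k₁ => (hinner k₁).tsum_eq, houter.tsum_eq]
  simp only [div_eq_mul_inv, one_mul, mul_inv]
  ring

end Normed

theorem lemma3_summand_eq {R : Type*} [Field R] (q : R) (m₁ m₂ k₁ k₂ : ℕ) :
    q ^ (2 * (k₁ + 1) * (m₁ + m₂) + 2 * (k₂ + 1) * m₂ + (m₁ + m₂) ^ 2) /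
        ((∏ j ∈ range (m₁ + 1), (1 + q ^ (2 * (k₁ + 1) + 2 * j))) *
          ∏ j ∈ range (m₂ + 1), (1 + q ^ (2 * (k₁ + 1) + 2 * (k₂ + 1) + 2 * m₁ + 2 * j))) =
      q ^ ((m₁ + m₂) ^ 2) * (q ^ 2) ^ (m₁ + m₂ + m₂) *
        ((q ^ 2) ^ (k₁ * (m₁ + m₂)) / negQPochhammer (q ^ 2) (1 + k₁) (m₁ + 1) *
          ((q ^ 2) ^ (k₂ * m₂) / negQPochhammer (q ^ 2) (1 + k₁ + (m₁ + 1) + k₂) (m₂ + 1))) := by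
  have h₁ : negQPochhammer (q ^ 2) (1 + k₁) (m₁ + 1) =
      ∏ j ∈ range (m₁ + 1), (1 + q ^ (2 * (k₁ + 1) + 2 * j)) := by
    rw [negQPochhammer_sq, add_comm 1 k₁]
  have h₂ : negQPochhammer (q ^ 2) (1 + k₁ + (m₁ + 1) + k₂) (m₂ + 1) =
      ∏ j ∈ range (m₂ + 1), (1 + q ^ (2 * (k₁ + 1) + 2 * (k₂ + 1) + 2 * m₁ + 2 * j)) := by
    rw [negQPochhammer_sq]
    exact prod_congr rfl fun j _ => by ring_nf
  rw [h₁, h₂]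
  ring

theorem prod_Icc_one_add_pow_two_mul_eq_negQPochhammer {R : Type*} [CommSemiring R] (q : R)
    (n : ℕ) : ∏ j ∈ Icc 1 n, (1 + q ^ (2 * j)) = negQPochhammer (q ^ 2) 1 n := by
  rw [← Ico_add_one_right_eq_Icc, prod_Ico_eq_prod_range, add_tsub_cancel_right,
    negQPochhammer_sq]
  simp only [mul_add]

theorem lemma3_general (q : ℂ) (hq : ‖q‖ < 1) (m₁ m₂ : ℕ) (hm₂ : 1 ≤ m₂) :
    (∑' k₂ : ℕ, ∑' k₁ : ℕ,
        q ^ (2 * (k₁ + 1) * (m₁ + m₂) + 2 * (k₂ + 1) * m₂ + (m₁ + m₂) ^ 2) /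
          ((∏ j ∈ Finset.range (m₁ + 1), (1 + q ^ (2 * (k₁ + 1) + 2 * j))) *
            ∏ j ∈ Finset.range (m₂ + 1),
              (1 + q ^ (2 * (k₁ + 1) + 2 * (k₂ + 1) + 2 * m₁ + 2 * j)))) =
      q ^ (2 * (m₁ + m₂)) * q ^ (2 * m₂) * q ^ ((m₁ + m₂) ^ 2) /
        ((1 - q ^ (2 * (m₁ + m₂))) * (1 - q ^ (2 * m₂)) *
          ∏ j ∈ Finset.Icc 1 (m₁ + m₂), (1 + q ^ (2 * j))) := by
  have hx : ‖q ^ 2‖ < 1 := by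
    rw [norm_pow]
    exact pow_lt_one₀ (norm_nonneg q) hq two_ne_zero
  simp_rw [lemma3_summand_eq, tsum_mul_left]
  rw [tsum_tsum_pow_mul_div_negQPochhammer hx m₁ (by omega),
    prod_Icc_one_add_pow_two_mul_eq_negQPochhammer]
  simp only [pow_mul]
  ring

/-- Lemma 3: for `m₁, m₂ ≥ 1`,
`∑_{k₂=1}^∞ ∑_{k₁=1}^∞ q^{2k₁(m₁+m₂)+2k₂m₂+(m₁+m₂)^2}
    / (∏_{j=0}^{m₁} (1+q^{2k₁+2j}) ∏_{j=0}^{m₂} (1+q^{2k₁+2k₂+2m₁+2j}))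
  = q^{2(m₁+m₂)} q^{2m₂} q^{(m₁+m₂)^2}
    / ((1-q^{2(m₁+m₂)}) (1-q^{2m₂}) ∏_{j=1}^{m₁+m₂} (1+q^{2j}))`.
The sums over `kᵢ ≥ 1` are written as sums over `kᵢ : ℕ` with `kᵢ` replaced by `kᵢ + 1`. -/
theorem lemma3 (q : ℂ) (hq : ‖q‖ < 1) (m₁ m₂ : ℕ) (hm₁ : 1 ≤ m₁) (hm₂ : 1 ≤ m₂) :
    (∑' k₂ : ℕ, ∑' k₁ : ℕ,
        q ^ (2 * (k₁ + 1) * (m₁ + m₂) + 2 * (k₂ + 1) * m₂ + (m₁ + m₂) ^ 2) /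
          ((∏ j ∈ Finset.range (m₁ + 1), (1 + q ^ (2 * (k₁ + 1) + 2 * j))) *
            ∏ j ∈ Finset.range (m₂ + 1),
              (1 + q ^ (2 * (k₁ + 1) + 2 * (k₂ + 1) + 2 * m₁ + 2 * j)))) =
      q ^ (2 * (m₁ + m₂)) * q ^ (2 * m₂) * q ^ ((m₁ + m₂) ^ 2) /
        ((1 - q ^ (2 * (m₁ + m₂))) * (1 - q ^ (2 * m₂)) *
          ∏ j ∈ Finset.Icc 1 (m₁ + m₂), (1 + q ^ (2 * j))) :=
  lemma3_general q hq m₁ m₂ hm₂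
end

section
/- (Lemma 5, second identity.) For every complex number q with |q| < 1, every natural number k ≥ 0 and every integer n ≥ 2, ( ∏_{j=0}^{n-1} q^{2k+2j+2} ) / ( ∏_{j=0}^{n} (1 + q^{2k+2j+1}) ) = ( q / (1 - q^{2n}) ) · ( - ( ∏_{j=1}^{n-1} q^{2k+2j+2} ) / ( ∏_{j=0}^{n-1} (1 + q^{2k+2j+1}) ) + ( ∏_{j=1}^{n-1} q^{2k+2j+2} ) / ( ∏_{j=1}^{n} (1 + q^{2k+2j+1}) ) ). Equivalently, the numerator of the left-hand side equals q^{2kn + n(n+1)}. -/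
/-!
Write `a j = 1 + q ^ (2k + 2j + 1)`. Both fractions on the right share the product
`a 1 ⋯ a (n-1)`, so their difference is `(a 0 - a n) / (a 0 ⋯ a n)` times the common numerator, and
`a 0 - a n = q ^ (2k + 1) (1 - q ^ (2n))`: the factor `1 - q ^ (2n)` cancels, and the remaining
`q ^ (2k + 2)` is the missing `j = 0` factor of the numerator on the left.
-/

open Finset

theorem neg_div_prod_range_add_div_prod_Icc {K : Type*} [Field K] {a : ℕ → K}
    (ha : ∀ j, a j ≠ 0) (p : K) (m : ℕ) :
    -p / ∏ j ∈ range (m + 1), a j + p / ∏ j ∈ Icc 1 (m + 1), a j =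
      p * (a 0 - a (m + 1)) / ∏ j ∈ range (m + 2), a j := by
  have hM : ∏ j ∈ Icc 1 m, a j ≠ 0 := prod_ne_zero_iff.2 fun j _ ↦ ha j
  rw [prod_range_succ _ (m + 1), prod_range_succ_eq_mul_prod_Icc, prod_Icc_succ_top (by omega)]
  field_simp [ha 0, ha (m + 1)]
  ring

theorem pow_ne_of_norm_lt_one {𝕜 : Type*} [NormedDivisionRing 𝕜] {q u : 𝕜} (hq : ‖q‖ < 1)
    (hu : ‖u‖ = 1) {r : ℕ} (hr : r ≠ 0) : q ^ r ≠ u := by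
  intro h
  have : ‖q‖ ^ r < 1 := pow_lt_one₀ (norm_nonneg q) hq hr
  rw [← norm_pow, h, hu] at this
  exact lt_irrefl _ this

/-- Lemma 5, second identity: for `n ≥ 2`,
`(∏_{j=0}^{n-1} q^{2k+2j+2}) / (∏_{j=0}^{n} (1+q^{2k+2j+1}))
  = (q/(1-q^{2n})) (-(∏_{j=1}^{n-1} q^{2k+2j+2}) / (∏_{j=0}^{n-1} (1+q^{2k+2j+1}))
      + (∏_{j=1}^{n-1} q^{2k+2j+2}) / (∏_{j=1}^{n} (1+q^{2k+2j+1})))`. -/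
theorem lemma5_second (q : ℂ) (hq : ‖q‖ < 1) (k : ℕ) (n : ℕ) (hn : 2 ≤ n) :
    (∏ j ∈ Finset.range n, q ^ (2 * k + 2 * j + 2)) /
        ∏ j ∈ Finset.range (n + 1), (1 + q ^ (2 * k + 2 * j + 1)) =
      q / (1 - q ^ (2 * n)) *
        (-(∏ j ∈ Finset.Icc 1 (n - 1), q ^ (2 * k + 2 * j + 2)) /
            (∏ j ∈ Finset.range n, (1 + q ^ (2 * k + 2 * j + 1))) +
          (∏ j ∈ Finset.Icc 1 (n - 1), q ^ (2 * k + 2 * j + 2)) /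
            ∏ j ∈ Finset.Icc 1 n, (1 + q ^ (2 * k + 2 * j + 1))) := by
  obtain ⟨m, rfl⟩ : ∃ m, n = m + 1 := ⟨n - 1, by omega⟩
  have hden (j : ℕ) : 1 + q ^ (2 * k + 2 * j + 1) ≠ 0 := fun h ↦
    pow_ne_of_norm_lt_one hq (by simp) (by omega)
      (eq_neg_of_add_eq_zero_right h)
  have hgap : 1 - q ^ (2 * (m + 1)) ≠ 0 :=
    sub_ne_zero.2 (pow_ne_of_norm_lt_one hq norm_one (by omega)).symm
  rw [Nat.add_sub_cancel, neg_div_prod_range_add_div_prod_Icc hden,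
    prod_range_succ_eq_mul_prod_Icc (fun j ↦ q ^ (2 * k + 2 * j + 2))]
  field_simp
  ring
end

section
/- (Lemma 6.) For every complex number q with |q| < 1 and every integer m ≥ 1, ∑_{k=1}^{∞} q^{2km + m(m+1)} / ( ∏_{j=0}^{m} (1 + q^{2k+2j+1}) ) = ( q^{2m} / (1 - q^{2m}) ) · q^{m(m+1)} / ( ∏_{j=1}^{m} (1 + q^{2j+1}) ). Here q^{2km + m(m+1)} = q^{2k+2} · q^{2k+4} ⋯ q^{2k+2m} and q^{m(m+1)} = q^2 · q^4 ⋯ q^{2m}; the series converges absolutely since |q| < 1. -/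
/-!
Write `P a n = ∏_{j<n} (1 + q^(a+2j+1))`. Splitting off the last or the first factor of
`P a (m+1)` gives `(1 - q^(2m)) / P a (m+1) = 1 / P a m - q^(2m) / P (a+2) m`, so after
multiplying by `q^(am)` the summands telescope in `b k = q^(2(k+1)m) / P (2(k+1)) m`. Since
`|P a n| ≥ (1 - |q|)^n`, the sequence `b` is dominated by a geometric series, and the sum is
`q^(m(m+1)) / (1 - q^(2m))` times `b 0`.
-/

open Finset

/-- The q-Pochhammer symbol `(-q^(a+1); q²)_n`. -/
def oddPowProd {R : Type*} [CommRing R] (q : R) (a n : ℕ) : R :=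
  ∏ j ∈ range n, (1 + q ^ (a + 2 * j + 1))

theorem HasSum.sub_succ {G : Type*} [AddCommGroup G] [TopologicalSpace G]
    [IsTopologicalAddGroup G] {b : ℕ → G} {s : G} (hb : HasSum b s) :
    HasSum (fun k => b k - b (k + 1)) (b 0) := by
  simpa using hb.sub ((hasSum_nat_add_iff' 1).mpr hb)

section CommRing

variable {R : Type*} [CommRing R] (q : R)

theorem oddPowProd_succ (a n : ℕ) :
    oddPowProd q a (n + 1) = oddPowProd q a n * (1 + q ^ (a + 2 * n + 1)) :=
  prod_range_succ _ n

theorem oddPowProd_succ' (a n : ℕ) :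
    oddPowProd q a (n + 1) = (1 + q ^ (a + 1)) * oddPowProd q (a + 2) n := by
  rw [oddPowProd, prod_range_succ', mul_comm]
  congr 1
  exact prod_congr rfl fun j _ => by ring_nf

theorem prod_Icc_one_add_pow_odd (m : ℕ) :
    ∏ j ∈ Icc 1 m, (1 + q ^ (2 * j + 1)) = oddPowProd q 2 m := by
  rw [oddPowProd, ← Ico_add_one_right_eq_Icc, ← prod_Ico_add' _ 0 m 1, ← range_eq_Ico]
  exact prod_congr rfl fun j _ => by ring_nf

end CommRing

section Field

variable {K : Type*} [Field K] (q : K)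

theorem one_sub_pow_div_oddPowProd_succ {a m : ℕ} (h : oddPowProd q a (m + 1) ≠ 0) :
    (1 - q ^ (2 * m)) / oddPowProd q a (m + 1) =
      1 / oddPowProd q a m - q ^ (2 * m) / oddPowProd q (a + 2) m := by
  have hlast := oddPowProd_succ q a m
  have hfirst := oddPowProd_succ' q a m
  have h₀ : oddPowProd q a m ≠ 0 := left_ne_zero_of_mul (hlast ▸ h)
  have h₂ : oddPowProd q (a + 2) m ≠ 0 := right_ne_zero_of_mul (hfirst ▸ h)
  rw [div_sub_div _ _ h₀ h₂, div_eq_div_iff h (mul_ne_zero h₀ h₂)]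
  linear_combination -oddPowProd q (a + 2) m * hlast + q ^ (2 * m) * oddPowProd q a m * hfirst

theorem pow_div_oddPowProd_succ {a m : ℕ} (N : ℕ) (h : oddPowProd q a (m + 1) ≠ 0)
    (hD : 1 - q ^ (2 * m) ≠ 0) :
    q ^ (a * m + N) / oddPowProd q a (m + 1) = q ^ N / (1 - q ^ (2 * m)) *
      (q ^ (a * m) / oddPowProd q a m - q ^ ((a + 2) * m) / oddPowProd q (a + 2) m) :=
  calc _ = q ^ N * q ^ (a * m) / (1 - q ^ (2 * m)) *
        ((1 - q ^ (2 * m)) / oddPowProd q a (m + 1)) := by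
        field_simp
        ring
    _ = _ := by
        rw [one_sub_pow_div_oddPowProd_succ q h]
        ring

end Field

section Normed

variable {𝕜 : Type*} [NormedField 𝕜] {q : 𝕜}

theorem one_sub_norm_le_norm_one_add_pow_s15 (hq : ‖q‖ < 1) {n : ℕ} (hn : n ≠ 0) :
    1 - ‖q‖ ≤ ‖1 + q ^ n‖ :=
  calc 1 - ‖q‖ ≤ ‖(1 : 𝕜)‖ - ‖-q ^ n‖ := by
        rw [norm_one, norm_neg, norm_pow]
        gcongr
        exact pow_le_of_le_one (norm_nonneg q) hq.le hn
    _ ≤ ‖1 + q ^ n‖ := by simpa using norm_sub_norm_le (1 : 𝕜) (-q ^ n)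

theorem pow_le_norm_oddPowProd (hq : ‖q‖ < 1) (a n : ℕ) :
    (1 - ‖q‖) ^ n ≤ ‖oddPowProd q a n‖ := by
  rw [oddPowProd, norm_prod]
  calc (1 - ‖q‖) ^ n = ∏ _j ∈ range n, (1 - ‖q‖) := by rw [prod_const, card_range]
    _ ≤ _ := prod_le_prod (fun _ _ => by linarith) fun _ _ =>
      one_sub_norm_le_norm_one_add_pow_s15 hq (Nat.succ_ne_zero _)

theorem oddPowProd_ne_zero (hq : ‖q‖ < 1) (a n : ℕ) : oddPowProd q a n ≠ 0 :=
  norm_pos_iff.mp <| (pow_pos (by linarith) n).trans_le (pow_le_norm_oddPowProd hq a n)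

theorem summable_pow_div_oddPowProd [CompleteSpace 𝕜] (hq : ‖q‖ < 1) {x : 𝕜} (hx : ‖x‖ < 1)
    (a : ℕ → ℕ) (n : ℕ) : Summable fun k => x ^ k / oddPowProd q (a k) n := by
  refine .of_norm_bounded
    ((summable_geometric_of_lt_one (norm_nonneg x) hx).mul_left ((1 - ‖q‖) ^ n)⁻¹) fun k => ?_
  rw [norm_div, norm_pow, div_eq_inv_mul]
  exact mul_le_mul_of_nonneg_right
    (inv_anti₀ (pow_pos (by linarith) n) (pow_le_norm_oddPowProd hq _ n)) (by positivity)

end Normed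

/-- Lemma 6: for `m ≥ 1`,
`∑_{k=1}^∞ q^{2km+m(m+1)} / ∏_{j=0}^{m} (1+q^{2k+2j+1})
  = (q^{2m}/(1-q^{2m})) · q^{m(m+1)} / ∏_{j=1}^{m} (1+q^{2j+1})`.
The sum over `k ≥ 1` is written as a sum over `k : ℕ` with `k` replaced by `k + 1`. -/
theorem lemma6 (q : ℂ) (hq : ‖q‖ < 1) (m : ℕ) (hm : 1 ≤ m) :
    (∑' k : ℕ, q ^ (2 * (k + 1) * m + m * (m + 1)) /
        ∏ j ∈ Finset.range (m + 1), (1 + q ^ (2 * (k + 1) + 2 * j + 1))) =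
      q ^ (2 * m) / (1 - q ^ (2 * m)) *
        (q ^ (m * (m + 1)) / ∏ j ∈ Finset.Icc 1 m, (1 + q ^ (2 * j + 1))) := by
  have hx : ‖q ^ (2 * m)‖ < 1 := by
    rw [norm_pow]
    exact pow_lt_one₀ (norm_nonneg q) hq (by omega)
  have hD : 1 - q ^ (2 * m) ≠ 0 := sub_ne_zero.mpr fun h => by simp [← h] at hx
  set b : ℕ → ℂ := fun k => q ^ (2 * (k + 1) * m) / oddPowProd q (2 * (k + 1)) m
  have hb : Summable b := by
    refine ((summable_nat_add_iff 1).mpr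
      (summable_pow_div_oddPowProd hq hx (2 * ·) m)).congr fun k => ?_
    simp only [b, ← pow_mul]
    ring_nf
  have hterm : ∀ k : ℕ, q ^ (2 * (k + 1) * m + m * (m + 1)) / oddPowProd q (2 * (k + 1)) (m + 1)
      = q ^ (m * (m + 1)) / (1 - q ^ (2 * m)) * (b k - b (k + 1)) := fun k => by
    simpa only [b, mul_add_one 2 (k + 1)] using
      pow_div_oddPowProd_succ q _ (oddPowProd_ne_zero hq _ (m + 1)) hD
  change ∑' k, _ / oddPowProd q _ _ = _
  rw [funext hterm, (hb.hasSum.sub_succ.mul_left _).tsum_eq, prod_Icc_one_add_pow_odd]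
  simp only [b]
  ring
end
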